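/- The maps D₁ and D₂ defined on generators by D₁(d) = d, D₁(u) = 0 and D₂(d) = 0, D₂(u) = u extend to K-linear derivations of the down-up algebra A(r+s, -rs), and they satisfy D₁(x) = x, D₂(x) = x, D₁(y) = y, D₂(y) = y where x = du - r·ud, y = ud - s·du. -/

import Mathlib

/-!
A linear map `D : A → A` satisfying the Leibniz rule is the same as an algebra map
`a ↦ a + ε D(a)` into the square-zero extension `A ⊕ εA` lifting the identity. On the free
algebra such a map can be prescribed freely on the generators, and it descends to the
down-up algebra once it respects the two relations. These are homogeneous of bidegree `(2,1)`
and `(1,2)` in `(d, u)`, so the weighted degree derivation `d ↦ α d`, `u ↦ β u` multiplies both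
sides of them by `2α + β` and `α + 2β` respectively. The elements `x` and `y` have bidegree
`(1,1)`, so they are eigenvectors of it with eigenvalue `α + β`.
-/

noncomputable section

/-- The defining relations of the down-up algebra `A(r+s, -rs)`:
`d²u = (r+s)·dud - rs·ud²` and `du² = (r+s)·udu - rs·u²d`,
where `d` is the generator indexed by `0` and `u` the one indexed by `1`. -/
inductive DownUpRel (K : Type) [CommRing K] (r s : K) :
    FreeAlgebra K (Fin 2) → FreeAlgebra K (Fin 2) → Prop
  | rel1 : DownUpRel K r s
      (FreeAlgebra.ι K 0 * FreeAlgebra.ι K 0 * FreeAlgebra.ι K 1)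
      ((r + s) • (FreeAlgebra.ι K 0 * FreeAlgebra.ι K 1 * FreeAlgebra.ι K 0)
        - (r * s) • (FreeAlgebra.ι K 1 * FreeAlgebra.ι K 0 * FreeAlgebra.ι K 0))
  | rel2 : DownUpRel K r s
      (FreeAlgebra.ι K 0 * FreeAlgebra.ι K 1 * FreeAlgebra.ι K 1)
      ((r + s) • (FreeAlgebra.ι K 1 * FreeAlgebra.ι K 0 * FreeAlgebra.ι K 1)
        - (r * s) • (FreeAlgebra.ι K 1 * FreeAlgebra.ι K 1 * FreeAlgebra.ι K 0))

/-- The down-up algebra `A(r+s, -rs)`. -/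
abbrev DownUp (K : Type) [CommRing K] (r s : K) : Type := RingQuot (DownUpRel K r s)

/-- The generator `d` of the down-up algebra. -/
def DownUp.d (K : Type) [CommRing K] (r s : K) : DownUp K r s :=
  RingQuot.mkAlgHom K (DownUpRel K r s) (FreeAlgebra.ι K 0)

/-- The generator `u` of the down-up algebra. -/
def DownUp.u (K : Type) [CommRing K] (r s : K) : DownUp K r s :=
  RingQuot.mkAlgHom K (DownUpRel K r s) (FreeAlgebra.ι K 1)

/-- The element `x = du - r·ud`. -/
def DownUp.x (K : Type) [CommRing K] (r s : K) : DownUp K r s :=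
  DownUp.d K r s * DownUp.u K r s - r • (DownUp.u K r s * DownUp.d K r s)

/-- The element `y = ud - s·du`. -/
def DownUp.y (K : Type) [CommRing K] (r s : K) : DownUp K r s :=
  DownUp.u K r s * DownUp.d K r s - s • (DownUp.d K r s * DownUp.u K r s)

open TrivSqZeroExt

section LeibnizOfLift

variable {K A : Type*} [CommSemiring K] [Semiring A] [Algebra K A]

def leibnizOfLift (Φ : A →ₐ[K] TrivSqZeroExt A A) : A →ₗ[K] A :=
  (sndHom A A).restrictScalars K ∘ₗ Φ.toLinearMap

theorem leibnizOfLift_apply (Φ : A →ₐ[K] TrivSqZeroExt A A) (a : A) :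
    leibnizOfLift Φ a = (Φ a).snd := rfl

theorem leibnizOfLift_mul {Φ : A →ₐ[K] TrivSqZeroExt A A} (hΦ : ∀ a, (Φ a).fst = a) (a b : A) :
    leibnizOfLift Φ (a * b) = leibnizOfLift Φ a * b + a * leibnizOfLift Φ b := by
  simp only [leibnizOfLift_apply, map_mul, snd_mul, hΦ, smul_eq_mul, op_smul_eq_mul]
  exact add_comm _ _

end LeibnizOfLift

namespace RingQuot

variable {K X : Type*} [CommSemiring K] {rel : FreeAlgebra K X → FreeAlgebra K X → Prop}

def liftTangent (v : X → RingQuot rel) :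
    FreeAlgebra K X →ₐ[K] TrivSqZeroExt (RingQuot rel) (RingQuot rel) :=
  FreeAlgebra.lift K fun i => (mkAlgHom K rel (FreeAlgebra.ι K i), v i)

theorem liftTangent_ι (v : X → RingQuot rel) (i : X) :
    liftTangent v (FreeAlgebra.ι K i) = (mkAlgHom K rel (FreeAlgebra.ι K i), v i) :=
  FreeAlgebra.lift_ι_apply _ _

@[simp]
theorem snd_liftTangent_ι (v : X → RingQuot rel) (i : X) :
    (liftTangent v (FreeAlgebra.ι K i)).snd = v i := by
  rw [liftTangent_ι]; rfl

@[simp]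
theorem fst_liftTangent (v : X → RingQuot rel) (a : FreeAlgebra K X) :
    (liftTangent v a).fst = mkAlgHom K rel a := by
  change (fstHom K _ _).comp (liftTangent v) a = _
  congr 1
  refine FreeAlgebra.hom_ext (funext fun i => ?_)
  simp only [Function.comp_apply, AlgHom.comp_apply, liftTangent_ι]
  rfl

theorem exists_leibniz_of_liftTangent (v : X → RingQuot rel)
    (hv : ∀ ⦃a b⦄, rel a b → (liftTangent v a).snd = (liftTangent v b).snd) :
    ∃ D : RingQuot rel →ₗ[K] RingQuot rel, (∀ a b, D (a * b) = D a * b + a * D b) ∧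
      ∀ i, D (mkAlgHom K rel (FreeAlgebra.ι K i)) = v i := by
  have hrel : ∀ ⦃a b⦄, rel a b → liftTangent v a = liftTangent v b := fun a b h =>
    TrivSqZeroExt.ext (by simp only [fst_liftTangent, mkAlgHom_rel K h]) (hv h)
  set Φ := liftAlgHom K ⟨liftTangent v, hrel⟩
  have hΦ : ∀ a, Φ (mkAlgHom K rel a) = liftTangent v a := liftAlgHom_mkAlgHom_apply K _ _
  have hfst : ∀ a, (Φ a).fst = a := by
    intro a
    obtain ⟨a, rfl⟩ := mkAlgHom_surjective K rel a
    rw [hΦ, fst_liftTangent]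
  exact ⟨leibnizOfLift Φ, leibnizOfLift_mul hfst, fun i => by simp [leibnizOfLift_apply, hΦ]⟩

end RingQuot

namespace DownUp

variable (K : Type) [CommRing K] (r s : K)

theorem d_mul_d_mul_u :
    d K r s * d K r s * u K r s
      = (r + s) • (d K r s * u K r s * d K r s) - (r * s) • (u K r s * d K r s * d K r s) := by
  simpa [d, u] using RingQuot.mkAlgHom_rel K (DownUpRel.rel1 (K := K) (r := r) (s := s))

theorem d_mul_u_mul_u :
    d K r s * u K r s * u K r s
      = (r + s) • (u K r s * d K r s * u K r s) - (r * s) • (u K r s * u K r s * d K r s) := by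
  simpa [d, u] using RingQuot.mkAlgHom_rel K (DownUpRel.rel2 (K := K) (r := r) (s := s))

@[simp]
theorem mkAlgHom_ι_zero : RingQuot.mkAlgHom K (DownUpRel K r s) (FreeAlgebra.ι K 0) = d K r s :=
  rfl

@[simp]
theorem mkAlgHom_ι_one : RingQuot.mkAlgHom K (DownUpRel K r s) (FreeAlgebra.ι K 1) = u K r s :=
  rfl

theorem exists_leibniz_smul_d_smul_u (α β : K) :
    ∃ D : DownUp K r s →ₗ[K] DownUp K r s, (∀ a b, D (a * b) = D a * b + a * D b) ∧
      D (d K r s) = α • d K r s ∧ D (u K r s) = β • u K r s := by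
  have hv : ∀ ⦃a b⦄, DownUpRel K r s a b →
      (RingQuot.liftTangent ![α • d K r s, β • u K r s] a).snd =
        (RingQuot.liftTangent ![α • d K r s, β • u K r s] b).snd := by
    rintro a b (_ | _)
    all_goals
      simp only [map_sub, map_smul, map_mul, snd_mul, snd_sub, snd_smul, fst_mul,
        RingQuot.fst_liftTangent, RingQuot.snd_liftTangent_ι, Matrix.cons_val_zero,
        Matrix.cons_val_one, mkAlgHom_ι_zero, mkAlgHom_ι_one, smul_eq_mul, op_smul_eq_mul,
        mul_smul_comm, smul_mul_assoc, add_mul]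
    · rw [d_mul_d_mul_u]; module
    · rw [d_mul_u_mul_u]; module
  obtain ⟨D, hD, hι⟩ := RingQuot.exists_leibniz_of_liftTangent _ hv
  exact ⟨D, hD, hι 0, hι 1⟩

variable {K r s}

theorem map_x_of_leibniz {α β : K}
    {D : DownUp K r s →ₗ[K] DownUp K r s} (hD : ∀ a b, D (a * b) = D a * b + a * D b)
    (hd : D (d K r s) = α • d K r s) (hu : D (u K r s) = β • u K r s) :
    D (x K r s) = (α + β) • x K r s := by
  simp only [x, map_sub, map_smul, hD, hd, hu, smul_mul_assoc, mul_smul_comm]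
  module

theorem map_y_of_leibniz {α β : K}
    {D : DownUp K r s →ₗ[K] DownUp K r s} (hD : ∀ a b, D (a * b) = D a * b + a * D b)
    (hd : D (d K r s) = α • d K r s) (hu : D (u K r s) = β • u K r s) :
    D (y K r s) = (α + β) • y K r s := by
  simp only [y, map_sub, map_smul, hD, hd, hu, smul_mul_assoc, mul_smul_comm]
  module

end DownUp

theorem stmt18_general (K : Type) [Field K] (r s : K) :
    ∃ D₁ D₂ : DownUp K r s →ₗ[K] DownUp K r s,
      (∀ a b : DownUp K r s, D₁ (a * b) = D₁ a * b + a * D₁ b) ∧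
      (∀ a b : DownUp K r s, D₂ (a * b) = D₂ a * b + a * D₂ b) ∧
      D₁ (DownUp.d K r s) = DownUp.d K r s ∧ D₁ (DownUp.u K r s) = 0 ∧
      D₂ (DownUp.d K r s) = 0 ∧ D₂ (DownUp.u K r s) = DownUp.u K r s ∧
      D₁ (DownUp.x K r s) = DownUp.x K r s ∧ D₂ (DownUp.x K r s) = DownUp.x K r s ∧
      D₁ (DownUp.y K r s) = DownUp.y K r s ∧ D₂ (DownUp.y K r s) = DownUp.y K r s := by
  obtain ⟨D₁, h₁, hd₁, hu₁⟩ := DownUp.exists_leibniz_smul_d_smul_u K r s 1 0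
  obtain ⟨D₂, h₂, hd₂, hu₂⟩ := DownUp.exists_leibniz_smul_d_smul_u K r s 0 1
  have hx₁ := DownUp.map_x_of_leibniz h₁ hd₁ hu₁
  have hy₁ := DownUp.map_y_of_leibniz h₁ hd₁ hu₁
  have hx₂ := DownUp.map_x_of_leibniz h₂ hd₂ hu₂
  have hy₂ := DownUp.map_y_of_leibniz h₂ hd₂ hu₂
  simp only [one_smul, zero_smul, add_zero, zero_add] at hd₁ hu₁ hd₂ hu₂ hx₁ hy₁ hx₂ hy₂
  exact ⟨D₁, D₂, h₁, h₂, hd₁, hu₁, hd₂, hu₂, hx₁, hx₂, hy₁, hy₂⟩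

/-- The assignments `D₁(d) = d, D₁(u) = 0` and `D₂(d) = 0, D₂(u) = u` extend to
`K`-linear derivations of the down-up algebra `A(r+s, -rs)`, and these satisfy
`D₁(x) = x`, `D₂(x) = x`, `D₁(y) = y`, `D₂(y) = y`. -/
theorem stmt18 (K : Type) [Field K] [CharZero K] (r s : K) (hr : r ≠ 0) (hs : s ≠ 0) :
    ∃ D₁ D₂ : DownUp K r s →ₗ[K] DownUp K r s,
      (∀ a b : DownUp K r s, D₁ (a * b) = D₁ a * b + a * D₁ b) ∧
      (∀ a b : DownUp K r s, D₂ (a * b) = D₂ a * b + a * D₂ b) ∧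
      D₁ (DownUp.d K r s) = DownUp.d K r s ∧ D₁ (DownUp.u K r s) = 0 ∧
      D₂ (DownUp.d K r s) = 0 ∧ D₂ (DownUp.u K r s) = DownUp.u K r s ∧
      D₁ (DownUp.x K r s) = DownUp.x K r s ∧ D₂ (DownUp.x K r s) = DownUp.x K r s ∧
      D₁ (DownUp.y K r s) = DownUp.y K r s ∧ D₂ (DownUp.y K r s) = DownUp.y K r s :=
  stmt18_general K r s
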